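/- Under the Fricke involution symmetry, the level-4 Eisenstein series at ∞ satisfies the reflection identity E_{k,4}^∞((e^{iθ} − 1)/4) = e^{ik(π−θ)} E_{k,4}^∞((e^{i(π−θ)} − 1)/4) for all θ ∈ (0, π). -/
import Mathlib


open Complex

/-- The weight-`k` Eisenstein series at the cusp `∞` for `Γ₀(N)`:
the sum of `(cz+d)^{-k}` over coprime pairs `(c,d)` with `N ∣ c`. -/
noncomputable def EisInf (N : ℕ) (k : ℤ) (z : ℂ) : ℂ :=
  ∑' v : {v : Fin 2 → ℤ // IsCoprime (v 0) (v 1) ∧ (N : ℤ) ∣ v 0},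
    ((v.1 0 : ℂ) * z + (v.1 1 : ℂ)) ^ (-k)

lemma eis_mem_aux (c d : ℤ) (hc : IsCoprime c d) (h4 : (4:ℤ) ∣ c) :
    IsCoprime (4 * d - c) (d - c / 2) ∧ (4:ℤ) ∣ (4 * d - c) := by
  obtain ⟨c₀, rfl⟩ := h4
  obtain ⟨x, y, hxy⟩ := hc
  have hd2 : (4*c₀)/2 = 2*c₀ := by omega
  rw [hd2]
  have hodd : ¬ (2:ℤ) ∣ d := by
    intro ⟨t, ht⟩
    have : (2:ℤ) ∣ 1 := ⟨x*(2*c₀) + y*t, by rw [← hxy, ht]; ring⟩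
    norm_num at this
  refine ⟨?_, ⟨d - c₀, by ring⟩⟩
  have h1 : IsCoprime (d - c₀) (d - 2*c₀) :=
    ⟨4*x + 2*y, -(4*x) - y, by linear_combination hxy⟩
  have h2 : IsCoprime (2:ℤ) (d - 2*c₀) := ⟨(1 - (d - 2*c₀))/2, 1, by omega⟩
  obtain ⟨a, b, hab⟩ := h2
  have h4' : IsCoprime (4:ℤ) (d - 2*c₀) :=
    ⟨a^2 + a*b*(d - 2*c₀), b^2*(d - 2*c₀),
      by linear_combination (a*2 + b*(d - 2*c₀) + 1) * hab⟩
  have h := h4'.mul_left h1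
  have heq : (4:ℤ) * d - 4*c₀ = 4 * (d - c₀) := by ring
  rw [heq]
  exact h

/-- The index bijection underlying the reflection identity. -/
def eisEquiv : {v : Fin 2 → ℤ // IsCoprime (v 0) (v 1) ∧ ((4:ℕ) : ℤ) ∣ v 0} ≃
    {v : Fin 2 → ℤ // IsCoprime (v 0) (v 1) ∧ ((4:ℕ) : ℤ) ∣ v 0} where
  toFun v := ⟨![4 * v.1 1 - v.1 0, v.1 1 - v.1 0 / 2], by
    have h := eis_mem_aux (v.1 0) (v.1 1) v.2.1 (by exact_mod_cast v.2.2)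
    simpa using h⟩
  invFun v := ⟨![-(4 * v.1 1 - v.1 0), -(v.1 1 - v.1 0 / 2)], by
    have h := eis_mem_aux (v.1 0) (v.1 1) v.2.1 (by exact_mod_cast v.2.2)
    refine ⟨?_, ?_⟩
    · simpa using h.1.neg_left.neg_right
    · simpa using h.2.neg_right⟩
  left_inv v := by
    have h4 : (4:ℤ) ∣ v.1 0 := by exact_mod_cast v.2.2
    apply Subtype.ext
    funext i
    fin_cases i <;> simp <;> omega
  right_inv v := by
    have h4 : (4:ℤ) ∣ v.1 0 := by exact_mod_cast v.2.2
    apply Subtype.ext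
    funext i
    fin_cases i <;> simp <;> omega

/-- Reflection identity for `E_{k,4}^∞` along the arc `(e^{iθ}-1)/4`:
`E_{k,4}^∞((e^{iθ} − 1)/4) = e^{ik(π−θ)} E_{k,4}^∞((e^{i(π−θ)} − 1)/4)`. -/
theorem eisInf_four_reflection (k : ℤ) (hk : 4 ≤ k) (hke : Even k)
    (θ : ℝ) (hθ : θ ∈ Set.Ioo 0 Real.pi) :
    EisInf 4 k ((Complex.exp (θ * Complex.I) - 1) / 4) =
      Complex.exp (Complex.I * k * (Real.pi - θ)) *
        EisInf 4 k ((Complex.exp ((Real.pi - θ) * Complex.I) - 1) / 4) := by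
  set u : ℂ := Complex.exp (θ * Complex.I) with hu
  have hune : u ≠ 0 := Complex.exp_ne_zero _
  have hw : Complex.exp (((Real.pi - θ : ℝ) : ℂ) * Complex.I) = -u⁻¹ := by
    push_cast
    rw [sub_mul, Complex.exp_sub, Complex.exp_pi_mul_I, hu]
    rw [neg_div, one_div]
  have hcoef : Complex.exp (Complex.I * k * ((Real.pi : ℂ) - (θ : ℂ))) = u ^ (-k) := by
    have h1 : Complex.I * (k : ℂ) * ((Real.pi : ℂ) - (θ : ℂ))
        = (k : ℤ) * (((Real.pi - θ : ℝ) : ℂ) * Complex.I) := by push_cast; ring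
    rw [h1, Complex.exp_int_mul, hw, hke.neg_zpow, inv_zpow, ← zpow_neg]
  rw [show ((Real.pi : ℂ) - (θ : ℂ)) * Complex.I = ((Real.pi - θ : ℝ) : ℂ) * Complex.I from by
    push_cast; ring]
  set z : ℂ := (u - 1) / 4 with hz
  set w : ℂ := (Complex.exp (((Real.pi - θ : ℝ) : ℂ) * Complex.I) - 1) / 4 with hwdef
  have hw4 : w = (-u⁻¹ - 1) / 4 := by rw [hwdef, hw]
  have key : ∀ (c d : ℤ), (4:ℤ) ∣ c →
      ((4 * d - c : ℤ) : ℂ) * z + ((d - c / 2 : ℤ) : ℂ) = u * ((c : ℂ) * w + (d : ℂ)) := by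
    intro c d hc
    obtain ⟨c₀, rfl⟩ := hc
    have hd2 : (4*c₀)/2 = 2*c₀ := by omega
    rw [hd2, hz, hw4]
    push_cast
    field_simp
    ring
  unfold EisInf
  rw [hcoef, ← tsum_mul_left]
  rw [← Equiv.tsum_eq eisEquiv (fun v => ((v.1 0 : ℂ) * z + (v.1 1 : ℂ)) ^ (-k))]
  apply tsum_congr
  intro v
  have h4 : (4:ℤ) ∣ v.1 0 := by exact_mod_cast v.2.2
  have he0 : ((eisEquiv v).1 0 : ℤ) = 4 * v.1 1 - v.1 0 := by simp [eisEquiv]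
  have he1 : ((eisEquiv v).1 1 : ℤ) = v.1 1 - v.1 0 / 2 := by simp [eisEquiv]
  simp only [he0, he1]
  rw [key (v.1 0) (v.1 1) h4, mul_zpow]
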